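/- Let n ≥ 2, θ ∈ (0, π/2), γ ∈ (0, 2), and C₀, R > 0. Let K ⊂ ℝ^{n+1} be a convex body contained in the closed upper half-space {x : x_{n+1} ≥ 0} with 0 ∈ K ∩ {x_{n+1} = 0}, such that at every point x ∈ K with x_{n+1} > 0, every outer unit normal v of K at x satisfies ⟨v, e_{n+1}⟩ > cos θ, and such that the support function h_K is differentiable at every point of ℝ^{n+1} \ {0}. Define s on the cap 𝒞_θ by s(ζ) := h_K(ζ + cos θ e_{n+1}), and for ζ ∈ 𝒞_θ with u := ζ + cos θ e_{n+1} ∈ S^n define the tangential gradient ∇s(ζ) := ∇h_K(u) − ⟨∇h_K(u), u⟩ u. Assume the gradient estimate ‖∇s(ζ)‖² ≤ C₀ · s(ζ)^γ · R^{2−γ} holds for all ζ ∈ 𝒞_θ. Let h(ũ) := max{⟨x, ũ⟩ : x ∈ K ∩ {x_{n+1} = 0}} for unit vectors ũ with ⟨ũ, e_{n+1}⟩ = 0. Then for every such ũ, setting w := sin θ · ũ + cos θ · e_{n+1} and letting Q denote the orthogonal projection of ℝ^{n+1} onto the orthogonal complement of span{ũ, e_{n+1}} (so that Q(∇h_K(w))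 is the spherical gradient of h at ũ), one has ‖Q(∇h_K(w))‖² ≤ C₀ · (sin θ)^γ · R^{2−γ} · h(ũ)^γ. -/

import Mathlib

open Real
open scoped RealInnerProductSpace

/-!
Put `u := sin θ • w + cos θ • e`, a unit vector on the boundary circle of the cap. A maximiser `x`
of `⟪·, u⟫` on `K` has `u` as an outer unit normal, and `⟪u, e⟫ = cos θ`, so the normal condition
forbids `x` from having positive height: `x` lies on the base, whence
`h_K(u) = ⟪x, u⟫ = sin θ ⟪x, w⟫ ≤ sin θ h(w)`. Since `u ∈ span {w, e}`, removing the whole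
`span {w, e}`-component of `∇h_K(u)` leaves a vector no longer than its component in `u^⊥`, and
the gradient estimate at `u` finishes the proof.
-/

section

variable {E : Type*} [NormedAddCommGroup E] [InnerProductSpace ℝ E]

lemma norm_sub_inner_smul_sub_inner_smul_le {w e : E} (hw : ‖w‖ = 1) (he : ‖e‖ = 1)
    (hwe : ⟪w, e⟫ = 0) (g : E) (s t : ℝ) :
    ‖g - ⟪g, w⟫ • w - ⟪g, e⟫ • e‖ ≤ ‖g - (s • w + t • e)‖ := by
  set a := g - ⟪g, w⟫ • w - ⟪g, e⟫ • e
  set d := (⟪g, w⟫ - s) • w + (⟪g, e⟫ - t) • e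
  have hew : ⟪e, w⟫ = 0 := by rw [real_inner_comm, hwe]
  have hww : ⟪w, w⟫ = 1 := by rw [real_inner_self_eq_norm_sq, hw, one_pow]
  have hee : ⟪e, e⟫ = 1 := by rw [real_inner_self_eq_norm_sq, he, one_pow]
  have had : ⟪a, d⟫ = 0 := by
    simp only [a, d, inner_add_right, inner_sub_left, real_inner_smul_left, real_inner_smul_right,
      hwe, hew, hww, hee]
    ring
  have hsplit : g - (s • w + t • e) = a + d := by simp only [a, d]; module
  rw [hsplit]
  nlinarith [norm_add_sq_eq_norm_sq_add_norm_sq_real had, norm_nonneg a, norm_nonneg (a + d),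
    mul_self_nonneg ‖d‖]

lemma norm_sin_smul_add_cos_smul {w e : E} (hw : ‖w‖ = 1) (he : ‖e‖ = 1) (hwe : ⟪w, e⟫ = 0)
    (θ : ℝ) : ‖sin θ • w + cos θ • e‖ = 1 := by
  have hpyth := norm_add_sq_eq_norm_sq_add_norm_sq_real (x := sin θ • w) (y := cos θ • e)
    (by rw [real_inner_smul_left, real_inner_smul_right, hwe, mul_zero, mul_zero])
  simp only [norm_smul, hw, he, mul_one, Real.norm_eq_abs, abs_mul_abs_self] at hpyth
  rw [← sqrt_mul_self (norm_nonneg _), hpyth, ← sq, ← sq, sin_sq_add_cos_sq, sqrt_one]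

noncomputable def supportFn (K : Set E) (z : E) : ℝ := sSup ((fun x => ⟪x, z⟫) '' K)

lemma inner_le_supportFn {K : Set E} (hK : IsCompact K) {x : E} (hx : x ∈ K) (z : E) :
    ⟪x, z⟫ ≤ supportFn K z :=
  le_csSup (hK.image (continuous_id.inner continuous_const)).bddAbove ⟨x, hx, rfl⟩

lemma supportFn_nonneg {K : Set E} (hK : IsCompact K) (h0 : (0 : E) ∈ K) (z : E) :
    0 ≤ supportFn K z := by
  simpa using inner_le_supportFn hK h0 z

lemma IsCompact.inter_inner_eq_zero {K : Set E} (hK : IsCompact K) (e : E) :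
    IsCompact (K ∩ {x | ⟪x, e⟫ = 0}) :=
  hK.inter_right (isClosed_eq (by fun_prop) continuous_const)

lemma supportFn_eq_inner_of_isMaxOn {K : Set E} {x z : E} (hx : x ∈ K)
    (hmax : IsMaxOn (⟪·, z⟫) K x) : supportFn K z = ⟪x, z⟫ :=
  IsGreatest.csSup_eq ⟨⟨x, hx, rfl⟩, by rintro _ ⟨y, hy, rfl⟩; exact hmax hy⟩

def OuterNormalsAbove (K : Set E) (e : E) (c : ℝ) : Prop :=
  ∀ x ∈ K, 0 < ⟪x, e⟫ → ∀ v : E, ‖v‖ = 1 → (∀ y ∈ K, ⟪y - x, v⟫ ≤ 0) → c < ⟪v, e⟫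

lemma OuterNormalsAbove.inner_eq_zero_of_isMaxOn {K : Set E} {e u x : E} {c : ℝ}
    (hK : OuterNormalsAbove K e c) (hupper : ∀ y ∈ K, 0 ≤ ⟪y, e⟫) (hu : ‖u‖ = 1)
    (hue : ⟪u, e⟫ ≤ c) (hx : x ∈ K) (hmax : IsMaxOn (⟪·, u⟫) K x) : ⟪x, e⟫ = 0 := by
  refine ((hupper x hx).eq_or_lt).elim Eq.symm fun hpos => absurd hue (not_le.2 ?_)
  refine hK x hx hpos u hu fun y hy => ?_
  rw [inner_sub_left, sub_nonpos]
  exact hmax hy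

lemma OuterNormalsAbove.supportFn_le_mul_supportFn_base {K : Set E} {e w : E} {s c : ℝ}
    (hK : OuterNormalsAbove K e c) (hupper : ∀ y ∈ K, 0 ≤ ⟪y, e⟫) (hKcpt : IsCompact K)
    (hKne : K.Nonempty) (hs : 0 ≤ s) (hu : ‖s • w + c • e‖ = 1) (hue : ⟪s • w + c • e, e⟫ ≤ c) :
    supportFn K (s • w + c • e) ≤ s * supportFn (K ∩ {x | ⟪x, e⟫ = 0}) w := by
  obtain ⟨x, hx, hmax⟩ := hKcpt.exists_isMaxOn hKne
    (by fun_prop : Continuous fun x : E => ⟪x, s • w + c • e⟫).continuousOn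
  have hxe := hK.inner_eq_zero_of_isMaxOn hupper hu hue hx hmax
  calc supportFn K (s • w + c • e) = s * ⟪x, w⟫ := by
        rw [supportFn_eq_inner_of_isMaxOn hx hmax, inner_add_right, real_inner_smul_right,
          real_inner_smul_right, hxe, mul_zero, add_zero]
    _ ≤ s * supportFn (K ∩ {x | ⟪x, e⟫ = 0}) w :=
        mul_le_mul_of_nonneg_left (inner_le_supportFn (hKcpt.inter_inner_eq_zero e) ⟨hx, hxe⟩ w) hs

end

theorem base_gradient_estimate_general (n : ℕ) (θ γ C₀ R : ℝ)
    (hθ : θ ∈ Set.Ioo 0 (π / 2)) (hγ : γ ∈ Set.Ioo (0 : ℝ) 2)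
    (hC₀ : 0 < C₀) (hR : 0 < R)
    (e : EuclideanSpace ℝ (Fin (n + 1)))
    (he : e = EuclideanSpace.single (Fin.last n) 1)
    (K : Set (EuclideanSpace ℝ (Fin (n + 1))))
    (hKcpt : IsCompact K)
    (hKupper : ∀ x ∈ K, 0 ≤ ⟪x, e⟫)
    (h0K : (0 : EuclideanSpace ℝ (Fin (n + 1))) ∈ K)
    (hnormal : ∀ x ∈ K, 0 < ⟪x, e⟫ →
      ∀ v : EuclideanSpace ℝ (Fin (n + 1)), ‖v‖ = 1 →
        (∀ y ∈ K, ⟪y - x, v⟫ ≤ 0) → Real.cos θ < ⟪v, e⟫)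
    (hK : EuclideanSpace ℝ (Fin (n + 1)) → ℝ)
    (hhK : hK = fun z => sSup ((fun x => ⟪x, z⟫) '' K))
    (hgrad : ∀ u : EuclideanSpace ℝ (Fin (n + 1)), ‖u‖ = 1 → Real.cos θ ≤ ⟪u, e⟫ →
      ‖gradient hK u - ⟪gradient hK u, u⟫ • u‖ ^ 2 ≤ C₀ * hK u ^ γ * R ^ (2 - γ)) :
    ∀ w : EuclideanSpace ℝ (Fin (n + 1)), ‖w‖ = 1 → ⟪w, e⟫ = 0 →
      ‖gradient hK (Real.sin θ • w + Real.cos θ • e)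
          - ⟪gradient hK (Real.sin θ • w + Real.cos θ • e), w⟫ • w
          - ⟪gradient hK (Real.sin θ • w + Real.cos θ • e), e⟫ • e‖ ^ 2
        ≤ C₀ * Real.sin θ ^ γ * R ^ (2 - γ)
            * sSup ((fun x => ⟪x, w⟫) '' (K ∩ {x | ⟪x, e⟫ = 0})) ^ γ := by
  intro w hw hwe
  have he1 : ‖e‖ = 1 := by simp [he]
  set u := sin θ • w + cos θ • e
  set g := gradient hK u
  have hu : ‖u‖ = 1 := norm_sin_smul_add_cos_smul hw he1 hwe θ
  have hue : ⟪u, e⟫ = cos θ := by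
    simp [u, inner_add_left, real_inner_smul_left, hwe, he1]
  have hsin : 0 ≤ sin θ := sin_nonneg_of_nonneg_of_le_pi hθ.1.le (by linarith [pi_pos, hθ.2])
  have hKu : hK u = supportFn K u := by rw [hhK]; rfl
  have hKu_le : hK u ≤ sin θ * supportFn (K ∩ {x | ⟪x, e⟫ = 0}) w :=
    hKu ▸ OuterNormalsAbove.supportFn_le_mul_supportFn_base hnormal hKupper hKcpt ⟨0, h0K⟩ hsin hu
      hue.le
  have hbase_nonneg : 0 ≤ supportFn (K ∩ {x | ⟪x, e⟫ = 0}) w :=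
    supportFn_nonneg (hKcpt.inter_inner_eq_zero e) ⟨h0K, by simp⟩ w
  have hKu_nonneg : 0 ≤ hK u := hKu ▸ supportFn_nonneg hKcpt h0K u
  calc _ ≤ ‖g - ⟪g, u⟫ • u‖ ^ 2 := by
        gcongr
        calc _ ≤ ‖g - ((⟪g, u⟫ * sin θ) • w + (⟪g, u⟫ * cos θ) • e)‖ :=
              norm_sub_inner_smul_sub_inner_smul_le hw he1 hwe g _ _
          _ = ‖g - ⟪g, u⟫ • u‖ := by simp only [u, smul_add, smul_smul]
    _ ≤ C₀ * hK u ^ γ * R ^ (2 - γ) := hgrad u hu hue.ge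
    _ ≤ C₀ * (sin θ * supportFn (K ∩ {x | ⟪x, e⟫ = 0}) w) ^ γ * R ^ (2 - γ) := by
        gcongr
        exact hγ.1.le
    _ = _ := by rw [mul_rpow hsin hbase_nonneg]; unfold supportFn; ring

/-- For an even-style setup: `n ≥ 2`, `θ ∈ (0, π/2)`, `γ ∈ (0, 2)`,
`C₀, R > 0`, and `K ⊂ ℝ^{n+1}` a convex body in the closed upper half-space with
`0 ∈ K ∩ {x_{n+1} = 0}`, whose outer unit normals at points of positive height satisfy
`⟨v, e_{n+1}⟩ > cos θ`, and whose support function `h_K` is differentiable away from `0`.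
If the capillary support function `s(ζ) = h_K(ζ + cos θ e_{n+1})` satisfies the gradient
estimate `‖∇s‖² ≤ C₀ s^γ R^{2-γ}` on `𝒞_θ` (where `∇s(ζ)` is the projection of
`∇h_K(u)` onto `u^⊥`, `u = ζ + cos θ e_{n+1}`), then the support function
`h(w̃) = max {⟨x, w̃⟩ : x ∈ K ∩ {x_{n+1} = 0}}` of the base satisfies
`‖∇̂h‖² ≤ C₀ (sin θ)^γ R^{2-γ} h^γ` on `S^{n-1}`, where `∇̂h(w̃)` is the projection of
`∇h_K(sin θ w̃ + cos θ e_{n+1})` onto the orthogonal complement of `span {w̃, e_{n+1}}`. -/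
theorem base_gradient_estimate (n : ℕ) (hn : 2 ≤ n) (θ γ C₀ R : ℝ)
    (hθ : θ ∈ Set.Ioo 0 (π / 2)) (hγ : γ ∈ Set.Ioo (0 : ℝ) 2)
    (hC₀ : 0 < C₀) (hR : 0 < R)
    (e : EuclideanSpace ℝ (Fin (n + 1)))
    (he : e = EuclideanSpace.single (Fin.last n) 1)
    (K : Set (EuclideanSpace ℝ (Fin (n + 1))))
    (hKcpt : IsCompact K) (hKconv : Convex ℝ K) (hKint : (interior K).Nonempty)
    (hKupper : ∀ x ∈ K, 0 ≤ ⟪x, e⟫)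
    (h0K : (0 : EuclideanSpace ℝ (Fin (n + 1))) ∈ K)
    (hnormal : ∀ x ∈ K, 0 < ⟪x, e⟫ →
      ∀ v : EuclideanSpace ℝ (Fin (n + 1)), ‖v‖ = 1 →
        (∀ y ∈ K, ⟪y - x, v⟫ ≤ 0) → Real.cos θ < ⟪v, e⟫)
    (hK : EuclideanSpace ℝ (Fin (n + 1)) → ℝ)
    (hhK : hK = fun z => sSup ((fun x => ⟪x, z⟫) '' K))
    (hdiff : ∀ z : EuclideanSpace ℝ (Fin (n + 1)), z ≠ 0 → DifferentiableAt ℝ hK z)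
    (hgrad : ∀ u : EuclideanSpace ℝ (Fin (n + 1)), ‖u‖ = 1 → Real.cos θ ≤ ⟪u, e⟫ →
      ‖gradient hK u - ⟪gradient hK u, u⟫ • u‖ ^ 2 ≤ C₀ * hK u ^ γ * R ^ (2 - γ)) :
    ∀ w : EuclideanSpace ℝ (Fin (n + 1)), ‖w‖ = 1 → ⟪w, e⟫ = 0 →
      ‖gradient hK (Real.sin θ • w + Real.cos θ • e)
          - ⟪gradient hK (Real.sin θ • w + Real.cos θ • e), w⟫ • w
          - ⟪gradient hK (Real.sin θ • w + Real.cos θ • e), e⟫ • e‖ ^ 2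
        ≤ C₀ * Real.sin θ ^ γ * R ^ (2 - γ)
            * sSup ((fun x => ⟪x, w⟫) '' (K ∩ {x | ⟪x, e⟫ = 0})) ^ γ :=
  base_gradient_estimate_general n θ γ C₀ R hθ hγ hC₀ hR e he K hKcpt hKupper h0K hnormal hK hhK
    hgrad
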